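/- arXiv:1402.3684 — 5 statements merged into one kernel-verified Lean document; each statement's English description precedes it below -/
import Mathlib

section
/- Let K, K₀ ∈ 𝒦^{n*} and let r = d_H(K,K₀) be their Hausdorff distance. Then θ^t(K) ≤ (1+r)^{2n}·θ^t(K₀). -/
open Metric Set Pointwise MeasureTheory Filter ENNReal

/-- The density of the system of translates `{K + x : x ∈ X}`:
`limsup_{R → ∞} (∑_{x ∈ X} vol((K + x) ∩ R·Bⁿ)) / vol(R·Bⁿ)`. -/
noncomputable def transDensity (n : ℕ) (K X : Set (EuclideanSpace ℝ (Fin n))) : ℝ≥0∞ :=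
  Filter.limsup
    (fun R : ℝ =>
      (∑' x : X, volume (((x : EuclideanSpace ℝ (Fin n)) +ᵥ K) ∩ closedBall 0 R)) /
        volume (closedBall (0 : EuclideanSpace ℝ (Fin n)) R))
    Filter.atTop

/-- The translative covering density `θ^t(K)`: the infimum of the densities of `{K + x : x ∈ X}`
over all countable `X ⊆ ℝⁿ` whose translates of `K` cover `ℝⁿ`. -/
noncomputable def thetaT (n : ℕ) (K : Set (EuclideanSpace ℝ (Fin n))) : ℝ≥0∞ :=
  ⨅ (X : Set (EuclideanSpace ℝ (Fin n)))
    (_ : X.Countable ∧ ⋃ x ∈ X, x +ᵥ K = Set.univ), transDensity n K X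

/-! If `d_H(K, K₀) = r` and both bodies contain the unit ball, convexity gives `K ⊆ (1 + r) K₀`
and `K₀ ⊆ (1 + r) K`. For a covering `X₀ + K₀`, the second inclusion makes `(1 + r)⁻¹ X₀ + K` a
covering, and rescaling by `1 + r` shows that its density is that of `X₀ + (1 + r) K`. Translates of
two bounded sets over the same centres have densities in the ratio of their volumes at most, and
`vol((1 + r) K) ≤ (1 + r)ⁿ vol((1 + r) K₀) = (1 + r)²ⁿ vol K₀`. -/

open Topology

theorem subset_one_add_smul_of_hausdorffDist_le {E : Type*} [NormedAddCommGroup E]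
    [NormedSpace ℝ E] {A B : Set E} {r : ℝ} (hr : 0 ≤ r)
    (hB : Convex ℝ B) (hBc : IsCompact B) (hB₁ : closedBall 0 1 ⊆ B)
    (hAB : hausdorffEDist A B ≠ ⊤) (h : hausdorffDist A B ≤ r) :
    A ⊆ (1 + r) • B := by
  intro x hx
  obtain ⟨y, hyB, hxy⟩ :=
    hBc.exists_infDist_eq_dist ⟨0, hB₁ (mem_closedBall_self zero_le_one)⟩ x
  have hx_sub_y : x - y ∈ r • B := by
    refine smul_set_mono hB₁ ?_
    rw [smul_unitClosedBall_of_nonneg hr, mem_closedBall_zero_iff, ← dist_eq_norm, ← hxy]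
    exact (infDist_le_hausdorffDist_of_mem hx hAB).trans h
  rw [hB.add_smul zero_le_one hr, one_smul]
  exact ⟨y, hyB, x - y, hx_sub_y, add_sub_cancel y x⟩

theorem iUnion_vadd_inv_smul_eq_univ {𝕜 E : Type*} [DivisionRing 𝕜] [AddCommGroup E]
    [Module 𝕜 E] {K K₀ X₀ : Set E} {c : 𝕜} (hc : c ≠ 0) (hK₀ : K₀ ⊆ c • K)
    (hX₀ : ⋃ x ∈ X₀, x +ᵥ K₀ = univ) : ⋃ x ∈ c⁻¹ • X₀, x +ᵥ K = univ := by
  refine eq_univ_of_forall fun y => ?_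
  obtain ⟨x₀, hx₀, k₀, hk₀, hy⟩ := mem_iUnion₂.1 (hX₀ ▸ mem_univ (c • y))
  obtain ⟨k, hk, rfl⟩ := hK₀ hk₀
  refine mem_iUnion₂.2 ⟨c⁻¹ • x₀, smul_mem_smul_set hx₀, k, hk, ?_⟩
  have := congrArg (c⁻¹ • ·) hy
  simpa [smul_add, inv_smul_smul₀ hc] using this

theorem measure_vadd_inter_closedBall_le {E : Type*} [NormedAddCommGroup E] [MeasurableSpace E]
    [MeasurableAdd E] {μ : Measure E} [μ.IsAddLeftInvariant] {K K₀ : Set E} {a : ℝ} {m : ℝ≥0∞}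
    (hK : K ⊆ closedBall 0 a) (hK₀ : K₀ ⊆ closedBall 0 a) (h : μ K ≤ m * μ K₀)
    (x : E) (R : ℝ) :
    μ ((x +ᵥ K) ∩ closedBall 0 R) ≤ m * μ ((x +ᵥ K₀) ∩ closedBall 0 (R + 2 * a)) := by
  rcases ((x +ᵥ K) ∩ closedBall 0 R).eq_empty_or_nonempty with hempty | ⟨_, ⟨k, hk, rfl⟩, hkR⟩
  · simp [hempty]
  have hx : ‖x‖ ≤ R + a := by
    have hxk : ‖x + k‖ ≤ R := mem_closedBall_zero_iff.1 hkR
    have := norm_sub_le (x + k) k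
    rw [add_sub_cancel_right] at this
    linarith [mem_closedBall_zero_iff.1 (hK hk)]
  have hsub : x +ᵥ K₀ ⊆ closedBall 0 (R + 2 * a) := by
    rintro _ ⟨k₀, hk₀, rfl⟩
    refine mem_closedBall_zero_iff.2 (?_ : ‖x + k₀‖ ≤ R + 2 * a)
    linarith [norm_add_le x k₀, mem_closedBall_zero_iff.1 (hK₀ hk₀)]
  calc μ ((x +ᵥ K) ∩ closedBall 0 R) ≤ μ (x +ᵥ K) := measure_mono inter_subset_left
    _ ≤ m * μ (x +ᵥ K₀) := by rwa [measure_vadd, measure_vadd]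
    _ = m * μ ((x +ᵥ K₀) ∩ closedBall 0 (R + 2 * a)) := by rw [inter_eq_self_of_subset_left hsub]

theorem tendsto_measure_closedBall_add_div {E : Type*} [NormedAddCommGroup E] [NormedSpace ℝ E]
    [MeasurableSpace E] [BorelSpace E] [FiniteDimensional ℝ E] (μ : Measure E)
    [μ.IsAddHaarMeasure] (x : E) (b : ℝ) :
    Tendsto (fun R => μ (closedBall x (R + b)) / μ (closedBall x R)) atTop (𝓝 1) := by
  set d := Module.finrank ℝ E
  have hlim : Tendsto (fun R : ℝ => ENNReal.ofReal ((1 + b / R) ^ d)) atTop (𝓝 1) := by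
    have := ((tendsto_const_nhds (x := (1 : ℝ))).add
      ((tendsto_const_nhds (x := b)).div_atTop tendsto_id)).pow d
    simpa using ENNReal.tendsto_ofReal this
  refine hlim.congr' ?_
  filter_upwards [eventually_gt_atTop (max 0 (-b))] with R hR
  have hR₀ : 0 < R := (le_max_left _ _).trans_lt hR
  have hRb : 0 ≤ R + b := by linarith [le_max_right 0 (-b)]
  rw [Measure.addHaar_closedBall μ x hRb, Measure.addHaar_closedBall μ x hR₀.le,
    ENNReal.mul_div_mul_right _ _ (measure_ball_pos μ 0 one_pos).ne' measure_ball_lt_top.ne,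
    ← ENNReal.ofReal_div_of_pos (pow_pos hR₀ d), ← div_pow, add_div, div_self hR₀.ne']

theorem addHaar_smul_le_of_subset_smul {E : Type*} [NormedAddCommGroup E] [NormedSpace ℝ E]
    [MeasurableSpace E] [BorelSpace E] [FiniteDimensional ℝ E] (μ : Measure E)
    [μ.IsAddHaarMeasure] {K K₀ : Set E} {c : ℝ} (hc : 0 ≤ c) (hK : K ⊆ c • K₀) :
    μ (c • K) ≤ ENNReal.ofReal (c ^ (2 * Module.finrank ℝ E)) * μ K₀ :=
  calc μ (c • K) ≤ ENNReal.ofReal (c ^ Module.finrank ℝ E) * μ (c • K₀) := by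
        rw [Measure.addHaar_smul_of_nonneg μ hc]; gcongr
    _ = ENNReal.ofReal (c ^ (2 * Module.finrank ℝ E)) * μ K₀ := by
        rw [Measure.addHaar_smul_of_nonneg μ hc, ← mul_assoc, ← ENNReal.ofReal_mul (by positivity),
          ← pow_add, two_mul]

theorem smul_vadd_set_eq {𝕜 E : Type*} [Monoid 𝕜] [AddMonoid E] [DistribMulAction 𝕜 E] (c : 𝕜)
    (x : E) (K : Set E) :
    c • (x +ᵥ K) = c • x +ᵥ c • K := by
  simp only [← image_smul, ← image_vadd, image_image, vadd_eq_add, smul_add]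

theorem transDensity_smul {n : ℕ} {c : ℝ} (hc : 0 < c) (K X : Set (EuclideanSpace ℝ (Fin n))) :
    transDensity n (c • K) (c • X) = transDensity n K X := by
  have hball {R : ℝ} (hR : 0 < R) :
      c • closedBall (0 : EuclideanSpace ℝ (Fin n)) (R / c) = closedBall 0 R := by
    rw [smul_closedBall c 0 (div_pos hR hc).le, smul_zero, Real.norm_of_nonneg hc.le,
      mul_div_cancel₀ R hc.ne']
  unfold transDensity
  conv_rhs => rw [← map_div_atTop_eq c hc, ← limsup_comp]
  refine limsup_congr ((eventually_gt_atTop 0).mono fun R hR => ?_)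
  simp only [Function.comp_apply]
  rw [← image_smul, tsum_image (fun y => volume ((y +ᵥ c • K) ∩ closedBall 0 R))
    (smul_right_injective _ hc.ne').injOn]
  simp only [← smul_vadd_set_eq, ← hball hR, ← smul_set_inter₀ hc.ne',
    Measure.addHaar_smul_of_nonneg _ hc.le, finrank_euclideanSpace_fin, ENNReal.tsum_mul_left]
  exact ENNReal.mul_div_mul_left _ _ (by simpa using pow_pos hc n) ENNReal.ofReal_ne_top

theorem transDensity_le_mul_of_volume_le {n : ℕ} {K K₀ X : Set (EuclideanSpace ℝ (Fin n))}
    {m : ℝ≥0∞} (hm : m ≠ ⊤) (hK : Bornology.IsBounded K) (hK₀ : Bornology.IsBounded K₀)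
    (h : volume K ≤ m * volume K₀) : transDensity n K X ≤ m * transDensity n K₀ X := by
  obtain ⟨a, ha, hKa⟩ := (hK.union hK₀).subset_closedBall_lt 0 0
  set V : ℝ → ℝ≥0∞ := fun R => volume (closedBall (0 : EuclideanSpace ℝ (Fin n)) R)
  set S : Set (EuclideanSpace ℝ (Fin n)) → ℝ → ℝ≥0∞ :=
    fun L R => ∑' x : X, volume (((x : EuclideanSpace ℝ (Fin n)) +ᵥ L) ∩ closedBall 0 R)
  set G : ℝ → ℝ≥0∞ := fun R => S K₀ R / V R
  have hS (R : ℝ) : S K R ≤ m * S K₀ (R + 2 * a) := by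
    rw [← ENNReal.tsum_mul_left]
    exact ENNReal.tsum_le_tsum fun x => measure_vadd_inter_closedBall_le
      (subset_union_left.trans hKa) (subset_union_right.trans hKa) h x R
  have hratio : ∀ᶠ R in atTop, S K R / V R ≤ m * (G (R + 2 * a) * (V (R + 2 * a) / V R)) := by
    filter_upwards [eventually_gt_atTop 0] with R hR
    have hV₀ : V (R + 2 * a) ≠ 0 := (measure_closedBall_pos _ _ (by linarith)).ne'
    have hV : V (R + 2 * a) ≠ ⊤ := measure_closedBall_lt_top.ne
    calc S K R / V R ≤ m * S K₀ (R + 2 * a) / V R := by gcongr; exact hS R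
      _ = m * (G (R + 2 * a) * (V (R + 2 * a) / V R)) := by
        simp only [G, div_eq_mul_inv, mul_assoc, ENNReal.inv_mul_cancel_left hV₀ hV]
  -- enlarging the radius by the constant `2 * a` costs a factor tending to `1`
  have hβ :=
    (tendsto_measure_closedBall_add_div volume (0 : EuclideanSpace ℝ (Fin n)) (2 * a)).limsup_eq
  calc transDensity n K X = limsup (fun R => S K R / V R) atTop := rfl
    _ ≤ limsup (fun R => m * (G (R + 2 * a) * (V (R + 2 * a) / V R))) atTop :=
      limsup_le_limsup hratio
    _ = m * limsup ((fun R => G (R + 2 * a)) * fun R => V (R + 2 * a) / V R) atTop :=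
      ENNReal.limsup_const_mul_of_ne_top hm
    _ ≤ m * (limsup (fun R => G (R + 2 * a)) atTop * 1) := by
      rw [← hβ]
      gcongr
      exact ENNReal.limsup_mul_le' (.inr (hβ ▸ one_ne_top)) (.inr (hβ ▸ one_ne_zero))
    _ = m * transDensity n K₀ X := by
      rw [mul_one, ← Function.comp_def G, limsup_comp, map_add_atTop_eq]
      rfl

theorem thetaT_le_mul_of_forall_exists {n : ℕ} {K K₀ : Set (EuclideanSpace ℝ (Fin n))} {C : ℝ≥0∞}
    (hC₀ : C ≠ 0) (hC : C ≠ ⊤)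
    (h : ∀ X₀ : Set (EuclideanSpace ℝ (Fin n)), X₀.Countable → ⋃ x ∈ X₀, x +ᵥ K₀ = univ →
      ∃ X : Set (EuclideanSpace ℝ (Fin n)), (X.Countable ∧ ⋃ x ∈ X, x +ᵥ K = univ) ∧
        transDensity n K X ≤ C * transDensity n K₀ X₀) :
    thetaT n K ≤ C * thetaT n K₀ := by
  simp only [thetaT, ENNReal.mul_iInf_of_ne hC₀ hC]
  refine le_iInf₂ fun X₀ hX₀ => ?_
  obtain ⟨X, hX, hle⟩ := h X₀ hX₀.1 hX₀.2
  exact (iInf₂_le X hX).trans hle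

theorem stmt_2_general (n : ℕ) (K K₀ : Set (EuclideanSpace ℝ (Fin n)))
    (hKcomp : IsCompact K) (hKconv : Convex ℝ K)
    (hK₀comp : IsCompact K₀) (hK₀conv : Convex ℝ K₀)
    (hKl : closedBall (0 : EuclideanSpace ℝ (Fin n)) 1 ⊆ K)
    (hK₀l : closedBall (0 : EuclideanSpace ℝ (Fin n)) 1 ⊆ K₀)
    (r : ℝ) (hr : r = hausdorffDist K K₀) :
    thetaT n K ≤ ENNReal.ofReal ((1 + r) ^ (2 * n)) * thetaT n K₀ := by
  set c := 1 + r
  have hr₀ : 0 ≤ r := hr ▸ hausdorffDist_nonneg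
  have hc : 0 < c := by positivity
  have hfin : hausdorffEDist K K₀ ≠ ⊤ := hausdorffEDist_ne_top_of_nonempty_of_bounded
    ⟨0, hKl (mem_closedBall_self zero_le_one)⟩ ⟨0, hK₀l (mem_closedBall_self zero_le_one)⟩
    hKcomp.isBounded hK₀comp.isBounded
  have hKK₀ : K ⊆ c • K₀ := subset_one_add_smul_of_hausdorffDist_le hr₀ hK₀conv
    hK₀comp hK₀l hfin hr.ge
  have hK₀K : K₀ ⊆ c • K := subset_one_add_smul_of_hausdorffDist_le hr₀ hKconv
    hKcomp hKl (hausdorffEDist_comm (s := K) ▸ hfin) (hausdorffDist_comm (s := K) ▸ hr.ge)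
  have hvol : volume (c • K) ≤ ENNReal.ofReal (c ^ (2 * n)) * volume K₀ := by
    simpa only [finrank_euclideanSpace_fin] using
      addHaar_smul_le_of_subset_smul volume hc.le hKK₀
  refine thetaT_le_mul_of_forall_exists (by simpa using pow_pos hc _) ENNReal.ofReal_ne_top
    fun X₀ hX₀ hcov => ⟨c⁻¹ • X₀, ⟨hX₀.image _, iUnion_vadd_inv_smul_eq_univ hc.ne' hK₀K hcov⟩, ?_⟩
  calc transDensity n K (c⁻¹ • X₀) = transDensity n (c • K) X₀ := by
        rw [← transDensity_smul (inv_pos.2 hc) (c • K), inv_smul_smul₀ hc.ne']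
    _ ≤ _ := transDensity_le_mul_of_volume_le ENNReal.ofReal_ne_top
        (hKcomp.smul c).isBounded hK₀comp.isBounded hvol

/-- Let `K, K₀ ∈ 𝒦^{n*}` and let `r = d_H(K, K₀)` be their Hausdorff distance.
Then `θ^t(K) ≤ (1+r)^{2n} · θ^t(K₀)`. -/
theorem stmt_2 (n : ℕ) (hn : 1 ≤ n) (K K₀ : Set (EuclideanSpace ℝ (Fin n)))
    (hKcomp : IsCompact K) (hKconv : Convex ℝ K) (hKint : (interior K).Nonempty)
    (hK₀comp : IsCompact K₀) (hK₀conv : Convex ℝ K₀) (hK₀int : (interior K₀).Nonempty)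
    (hKl : closedBall (0 : EuclideanSpace ℝ (Fin n)) 1 ⊆ K) (hKu : K ⊆ closedBall 0 n)
    (hK₀l : closedBall (0 : EuclideanSpace ℝ (Fin n)) 1 ⊆ K₀) (hK₀u : K₀ ⊆ closedBall 0 n)
    (r : ℝ) (hr : r = hausdorffDist K K₀) :
    thetaT n K ≤ ENNReal.ofReal ((1 + r) ^ (2 * n)) * thetaT n K₀ :=
  stmt_2_general n K K₀ hKcomp hKconv hK₀comp hK₀conv hKl hK₀l r hr
end

section
/- Let K, K₀ ∈ 𝒦^{n*} and let r = d_H(K,K₀) be their Hausdorff distance. Then δ^t(K) ≤ (1+r)^{2n}·δ^t(K₀). -/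
/-!
Put `s = 1 + r`. Since `K₀` is convex and contains `Bⁿ`, `K ⊆ K₀ + rBⁿ ⊆ K₀ + rK₀ = sK₀`, and
symmetrically `K₀ ⊆ sK`. Hence if the translates `K + x` (`x ∈ X`) form a packing, so do the
translates `K₀ + sx`, because `K₀ + sx ⊆ s(K + x)`. A homothety of ratio `1/s` maps the part of
`K + x` inside `RBⁿ` into the part of `K₀ + sx` inside `s(R + n)Bⁿ`, so volumes lose at most a
factor `sⁿ`; the ratio of the volumes of the two balls tends to `sⁿ`, giving `s²ⁿ` in total.
-/

open Metric Set Pointwise MeasureTheory Filter ENNReal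

/-- The translative packing density `δ^t(K)`: the supremum of the densities of `{K + x : x ∈ X}`
over all countable `X ⊆ ℝⁿ` such that the translates `K + x` (`x ∈ X`) have pairwise disjoint
interiors. -/
noncomputable def deltaT (n : ℕ) (K : Set (EuclideanSpace ℝ (Fin n))) : ℝ≥0∞ :=
  ⨆ (X : Set (EuclideanSpace ℝ (Fin n)))
    (_ : X.Countable ∧
      X.Pairwise fun x y => interior (x +ᵥ K) ∩ interior (y +ᵥ K) = ∅),
    transDensity n K X

open Module Topology

section NormedSpace

variable {E : Type*} [NormedAddCommGroup E]

theorem norm_le_of_vadd_inter_closedBall_nonempty {K : Set E} {ρ R : ℝ} {x : E}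
    (hK : K ⊆ closedBall 0 ρ) (h : ((x +ᵥ K) ∩ closedBall 0 R).Nonempty) : ‖x‖ ≤ R + ρ := by
  obtain ⟨_, ⟨k, hk, rfl⟩, hxk⟩ := h
  calc ‖x‖ = ‖(x + k) - k‖ := by rw [add_sub_cancel_right]
    _ ≤ ‖x + k‖ + ‖k‖ := norm_sub_le _ _
    _ ≤ R + ρ := add_le_add (mem_closedBall_zero_iff.1 hxk) (mem_closedBall_zero_iff.1 (hK hk))

variable [NormedSpace ℝ E]

theorem subset_smul_of_hausdorffDist_le {A B : Set E} (hAc : IsCompact A) (hAconv : Convex ℝ A)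
    (hA : closedBall (0 : E) 1 ⊆ A) (hB : Bornology.IsBounded B) {r : ℝ}
    (hd : hausdorffDist B A ≤ r) : B ⊆ (1 + r) • A := by
  intro x hx
  have hr : 0 ≤ r := hausdorffDist_nonneg.trans hd
  have hAne : A.Nonempty := ⟨0, hA (mem_closedBall_self zero_le_one)⟩
  obtain ⟨y, hy, hxy⟩ := hAc.exists_infDist_eq_dist hAne x
  have hfin : hausdorffEDist B A ≠ ⊤ :=
    hausdorffEDist_ne_top_of_nonempty_of_bounded ⟨x, hx⟩ hAne hB hAc.isBounded
  have hdist : dist x y ≤ r := hxy ▸ (infDist_le_hausdorffDist_of_mem hx hfin).trans hd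
  have hxy_mem : x - y ∈ r • A := by
    refine smul_set_mono hA ?_
    rw [smul_unitClosedBall_of_nonneg hr, mem_closedBall_zero_iff, ← dist_eq_norm]
    exact hdist
  rw [hAconv.add_smul zero_le_one hr, one_smul]
  exact ⟨y, hy, x - y, hxy_mem, add_sub_cancel y x⟩

theorem pairwise_interior_vadd_smul {K L X : Set E} {s : ℝ} (hs : s ≠ 0) (hLK : L ⊆ s • K)
    (hX : X.Pairwise fun x y => interior (x +ᵥ K) ∩ interior (y +ᵥ K) = ∅) :
    (s • X).Pairwise fun x y => interior (x +ᵥ L) ∩ interior (y +ᵥ L) = ∅ := by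
  have hsub : ∀ z : E, interior (s • z +ᵥ L) ⊆ s • interior (z +ᵥ K) := by
    intro z
    rw [← interior_smul₀ hs]
    refine interior_mono ?_
    rintro _ ⟨l, hl, rfl⟩
    obtain ⟨k, hk, rfl⟩ := hLK hl
    exact ⟨z + k, ⟨k, hk, rfl⟩, smul_add s z k⟩
  rintro _ ⟨x, hx, rfl⟩ _ ⟨y, hy, rfl⟩ hne
  have hxy : x ≠ y := by rintro rfl; exact hne rfl
  refine subset_empty_iff.1 ((inter_subset_inter (hsub x) (hsub y)).trans ?_)
  rw [← smul_set_inter₀ hs, hX hx hy hxy, smul_set_empty]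

variable [MeasurableSpace E] [BorelSpace E] [FiniteDimensional ℝ E] (μ : Measure E)
  [μ.IsAddHaarMeasure]

theorem measure_vadd_inter_closedBall_le_s3 {K L : Set E} {ρ s : ℝ} (hK : K ⊆ closedBall 0 ρ)
    (hs : 1 ≤ s) (hKL : K ⊆ s • L) (x : E) (R : ℝ) :
    μ ((x +ᵥ K) ∩ closedBall 0 R)
      ≤ ENNReal.ofReal (s ^ finrank ℝ E) * μ ((s • x +ᵥ L) ∩ closedBall 0 (s * (R + ρ))) := by
  set A := (x +ᵥ K) ∩ closedBall 0 R
  rcases A.eq_empty_or_nonempty with hA | hA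
  · simp [hA]
  have hs0 : 0 < s := one_pos.trans_le hs
  have hx : ‖x‖ ≤ R + ρ := norm_le_of_vadd_inter_closedBall_nonempty hK hA
  have hρ : 0 ≤ ρ := by
    obtain ⟨_, ⟨k, hk, rfl⟩, -⟩ := hA
    exact (norm_nonneg k).trans (mem_closedBall_zero_iff.1 (hK hk))
  -- the homothety `z ↦ (s - s⁻¹) • x + s⁻¹ • z` sends `x + s • l` to `s • x + l`
  have hmaps : (s - s⁻¹) • x +ᵥ s⁻¹ • A ⊆ (s • x +ᵥ L) ∩ closedBall 0 (s * (R + ρ)) := by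
    rintro _ ⟨_, ⟨_, ⟨⟨k, hk, rfl⟩, hz⟩, rfl⟩, rfl⟩
    obtain ⟨l, hl, rfl⟩ := hKL hk
    refine ⟨⟨l, hl, ?_⟩, ?_⟩
    · simp only [vadd_eq_add, smul_add, smul_smul, inv_mul_cancel₀ hs0.ne', one_smul, sub_smul]
      abel
    · have hsinv : s⁻¹ ≤ s := (inv_le_one_of_one_le₀ hs).trans hs
      rw [mem_closedBall_zero_iff] at hz ⊢
      calc ‖(s - s⁻¹) • x +ᵥ s⁻¹ • (x +ᵥ s • l)‖
          ≤ (s - s⁻¹) * ‖x‖ + s⁻¹ * ‖x +ᵥ s • l‖ := by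
            refine (norm_add_le _ _).trans_eq ?_
            rw [norm_smul, norm_smul, Real.norm_of_nonneg (sub_nonneg.2 hsinv),
              Real.norm_of_nonneg (inv_nonneg.2 hs0.le)]
        _ ≤ (s - s⁻¹) * (R + ρ) + s⁻¹ * (R + ρ) := by gcongr; linarith
        _ = s * (R + ρ) := by ring
  calc μ A = ENNReal.ofReal (s ^ finrank ℝ E) * μ ((s - s⁻¹) • x +ᵥ s⁻¹ • A) := by
        rw [measure_vadd, Measure.addHaar_smul_of_nonneg μ (inv_nonneg.2 hs0.le), ← mul_assoc,
          ← ENNReal.ofReal_mul (by positivity), ← mul_pow, mul_inv_cancel₀ hs0.ne', one_pow,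
          ENNReal.ofReal_one, one_mul]
    _ ≤ _ := by gcongr

theorem tendsto_measure_closedBall_div {a b : ℝ} (ha : 0 < a) :
    Tendsto (fun R => μ (closedBall (0 : E) (a * (R + b))) / μ (closedBall 0 R)) atTop
      (𝓝 (ENNReal.ofReal (a ^ finrank ℝ E))) := by
  have hratio : Tendsto (fun R : ℝ => (a * (R + b) / R) ^ finrank ℝ E) atTop
      (𝓝 (a ^ finrank ℝ E)) := by
    have h : Tendsto (fun R : ℝ => a + a * b / R) atTop (𝓝 (a + 0)) :=
      tendsto_const_nhds.add (tendsto_const_nhds.div_atTop tendsto_id)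
    rw [add_zero] at h
    refine (h.congr' ?_).pow _
    filter_upwards [eventually_gt_atTop 0] with R hR
    field_simp
  refine ((ENNReal.continuous_ofReal.tendsto _).comp hratio).congr' ?_
  filter_upwards [eventually_gt_atTop 0, eventually_ge_atTop (-b)] with R hR hRb
  have hball0 : μ (closedBall (0 : E) 1) ≠ 0 := (measure_closedBall_pos μ _ one_pos).ne'
  rw [Function.comp_apply, Measure.addHaar_closedBall' _ _ hR.le,
    Measure.addHaar_closedBall' _ _ (by nlinarith), ENNReal.mul_div_mul_right _ _ hball0
      measure_closedBall_lt_top.ne, ← ENNReal.ofReal_div_of_pos (pow_pos hR _), div_pow]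

end NormedSpace

theorem transDensity_le_of_subset_smul {n : ℕ} {K L X : Set (EuclideanSpace ℝ (Fin n))}
    {ρ s : ℝ} (hK : K ⊆ closedBall 0 ρ) (hs : 1 ≤ s) (hKL : K ⊆ s • L) :
    transDensity n K X ≤ ENNReal.ofReal (s ^ (2 * n)) * transDensity n L (s • X) := by
  have hs0 : 0 < s := one_pos.trans_le hs
  set V : ℝ → ℝ≥0∞ := fun R => volume (closedBall (0 : EuclideanSpace ℝ (Fin n)) R)
  set g : ℝ → ℝ≥0∞ := fun R =>
    (∑' y : ↥(s • X), volume (((y : EuclideanSpace ℝ (Fin n)) +ᵥ L) ∩ closedBall 0 R)) / V R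
  set a : ℝ → ℝ≥0∞ := fun R => ENNReal.ofReal (s ^ n) * (V (s * (R + ρ)) / V R)
  have ha : Tendsto a atTop (𝓝 (ENNReal.ofReal (s ^ (2 * n)))) := by
    have h := ENNReal.Tendsto.const_mul (a := ENNReal.ofReal (s ^ n))
      (tendsto_measure_closedBall_div (E := EuclideanSpace ℝ (Fin n)) volume (b := ρ) hs0)
      (Or.inr ofReal_ne_top)
    rwa [finrank_euclideanSpace_fin, ← ENNReal.ofReal_mul (by positivity), ← pow_add,
      ← two_mul] at h
  have hbound : ∀ᶠ R in atTop,
      (∑' x : X, volume (((x : EuclideanSpace ℝ (Fin n)) +ᵥ K) ∩ closedBall 0 R)) / V R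
        ≤ a R * g (s * (R + ρ)) := by
    filter_upwards [eventually_gt_atTop (-ρ)] with R hR
    have hV : V (s * (R + ρ)) ≠ 0 := (measure_closedBall_pos _ _ (by nlinarith)).ne'
    have hVtop : V (s * (R + ρ)) ≠ ⊤ := measure_closedBall_lt_top.ne
    have hsum : ∑' x : X, volume (((x : EuclideanSpace ℝ (Fin n)) +ᵥ K) ∩ closedBall 0 R)
        ≤ ENNReal.ofReal (s ^ n) * ∑' y : ↥(s • X),
            volume (((y : EuclideanSpace ℝ (Fin n)) +ᵥ L) ∩ closedBall 0 (s * (R + ρ))) := by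
      rw [← image_smul, tsum_image (fun y => volume ((y +ᵥ L) ∩ closedBall 0 (s * (R + ρ))))
          (smul_right_injective _ hs0.ne').injOn,
        ← ENNReal.tsum_mul_left]
      refine ENNReal.tsum_le_tsum fun x => ?_
      simpa using measure_vadd_inter_closedBall_le_s3 volume hK hs hKL x R
    calc _ ≤ ENNReal.ofReal (s ^ n) * (∑' y : ↥(s • X),
            volume (((y : EuclideanSpace ℝ (Fin n)) +ᵥ L) ∩ closedBall 0 (s * (R + ρ)))) / V R :=
          ENNReal.div_le_div_right hsum _
      _ = a R * g (s * (R + ρ)) := by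
          simp only [a, g, div_eq_mul_inv]
          conv_lhs => rw [← mul_one (_ * (V R)⁻¹), ← ENNReal.mul_inv_cancel hV hVtop]
          ring
  calc transDensity n K X ≤ limsup (a * (g ∘ fun R => s * (R + ρ))) atTop :=
        limsup_le_limsup hbound
    _ ≤ limsup a atTop * limsup (g ∘ fun R => s * (R + ρ)) atTop := by
        refine ENNReal.limsup_mul_le' ?_ ?_ <;> rw [ha.limsup_eq]
        · exact Or.inl (by positivity)
        · exact Or.inl ofReal_ne_top
    _ ≤ ENNReal.ofReal (s ^ (2 * n)) * transDensity n L (s • X) := by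
        rw [ha.limsup_eq]
        exact mul_le_mul_right ((tendsto_atTop_add_const_right _ ρ tendsto_id).const_mul_atTop
          hs0).limsup_comp_le_limsup _

theorem stmt_3_general (n : ℕ) (K K₀ : Set (EuclideanSpace ℝ (Fin n)))
    (hKcomp : IsCompact K) (hKconv : Convex ℝ K)
    (hK₀comp : IsCompact K₀) (hK₀conv : Convex ℝ K₀)
    (hKl : closedBall (0 : EuclideanSpace ℝ (Fin n)) 1 ⊆ K) (hKu : K ⊆ closedBall 0 n)
    (hK₀l : closedBall (0 : EuclideanSpace ℝ (Fin n)) 1 ⊆ K₀)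
    (r : ℝ) (hr : r = hausdorffDist K K₀) :
    deltaT n K ≤ ENNReal.ofReal ((1 + r) ^ (2 * n)) * deltaT n K₀ := by
  have hs : 1 ≤ 1 + r := le_add_of_nonneg_right (hr ▸ hausdorffDist_nonneg)
  have hKK₀ : K ⊆ (1 + r) • K₀ :=
    subset_smul_of_hausdorffDist_le hK₀comp hK₀conv hK₀l hKcomp.isBounded hr.ge
  have hK₀K : K₀ ⊆ (1 + r) • K :=
    subset_smul_of_hausdorffDist_le hKcomp hKconv hKl hK₀comp.isBounded
      (hr ▸ hausdorffDist_comm.le)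
  refine iSup₂_le fun X ⟨hXc, hXp⟩ => ?_
  have hpacking : transDensity n K₀ ((1 + r) • X) ≤ deltaT n K₀ :=
    le_iSup₂ (f := fun Y _ => transDensity n K₀ Y) ((1 + r) • X)
      ⟨hXc.image ((1 + r) • ·),
        pairwise_interior_vadd_smul (one_pos.trans_le hs).ne' hK₀K hXp⟩
  exact (transDensity_le_of_subset_smul hKu hs hKK₀).trans (by gcongr)

/-- Let `K, K₀ ∈ 𝒦^{n*}` and let `r = d_H(K, K₀)` be their Hausdorff distance.
Then `δ^t(K) ≤ (1+r)^{2n} · δ^t(K₀)`. -/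
theorem stmt_3 (n : ℕ) (hn : 1 ≤ n) (K K₀ : Set (EuclideanSpace ℝ (Fin n)))
    (hKcomp : IsCompact K) (hKconv : Convex ℝ K) (hKint : (interior K).Nonempty)
    (hK₀comp : IsCompact K₀) (hK₀conv : Convex ℝ K₀) (hK₀int : (interior K₀).Nonempty)
    (hKl : closedBall (0 : EuclideanSpace ℝ (Fin n)) 1 ⊆ K) (hKu : K ⊆ closedBall 0 n)
    (hK₀l : closedBall (0 : EuclideanSpace ℝ (Fin n)) 1 ⊆ K₀) (hK₀u : K₀ ⊆ closedBall 0 n)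
    (r : ℝ) (hr : r = hausdorffDist K K₀) :
    deltaT n K ≤ ENNReal.ofReal ((1 + r) ^ (2 * n)) * deltaT n K₀ :=
  stmt_3_general n K K₀ hKcomp hKconv hK₀comp hK₀conv hKl hKu hK₀l r hr
end

section
/- There exist positive constants c and d, depending only on the dimension n, such that |δ^t(K₁) − δ^t(K₂)| ≤ c·d_H(K₁,K₂) holds for every pair K₁, K₂ ∈ 𝒦^{n*} with d_H(K₁,K₂) ≤ d. -/
open Metric Set Pointwise MeasureTheory Filter ENNReal

/-!
If `d_H(K, K') = ε ≤ 1` and both bodies are convex and contain `Bⁿ`, then `K ⊆ (1 + ε) • K'` and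
`K' ⊆ (1 + ε) • K`. Scaling a packing of translates of `K` by `m = 1 + ε` gives a packing of
translates of `m • K` with the same density, and shrinking each translate to the corresponding
translate of `K' ⊆ m • K` gives a packing of `K'`. Each translate loses volume
`vol(m • K \ K') ≤ (mⁿ - m⁻ⁿ) vol K = O(ε)`, and since the translates contain disjoint unit balls,
for large `R` at most `2ⁿ vol(R • Bⁿ) / vol Bⁿ` of them meet `R • Bⁿ`. So the density drops by
`O(ε)`, and the argument is symmetric in `K` and `K'`.
-/

theorem one_add_pow_le {ε : ℝ} (n : ℕ) (h0 : 0 ≤ ε) (h1 : ε ≤ 1) :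
    (1 + ε) ^ n ≤ 1 + (2 ^ n - 1) * ε := by
  have h := (convexOn_pow n).2 (Set.mem_Ici.2 zero_le_one) (Set.mem_Ici.2 zero_le_two)
    (sub_nonneg.2 h1) h0 (sub_add_cancel 1 ε)
  simp only [smul_eq_mul, mul_one, one_pow] at h
  calc (1 + ε) ^ n = (1 - ε + ε * 2) ^ n := by ring
    _ ≤ 1 - ε + ε * 2 ^ n := h
    _ = 1 + (2 ^ n - 1) * ε := by ring

theorem one_add_pow_sub_inv_le {ε : ℝ} (n : ℕ) (h0 : 0 ≤ ε) (h1 : ε ≤ 1) :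
    (1 + ε) ^ n - ((1 + ε) ^ n)⁻¹ ≤ 2 ^ (n + 1) * ε := by
  set P := (1 + ε) ^ n
  have hP : 1 ≤ P := one_le_pow₀ (by linarith)
  have hinv : P⁻¹ * P = 1 := inv_mul_cancel₀ (by positivity)
  have hAMGM : P - P⁻¹ ≤ 2 * (P - 1) := by nlinarith [inv_nonneg.mpr (zero_le_one.trans hP)]
  have hpow := one_add_pow_le n h0 h1
  rw [pow_succ]
  nlinarith

theorem limsup_comp_div_const {α : Type*} [ConditionallyCompleteLattice α] (u : ℝ → α) {m : ℝ}
    (hm : 0 < m) : limsup (fun R => u (R / m)) atTop = limsup u atTop := by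
  conv_rhs => rw [← map_div_atTop_eq m hm]
  rfl

theorem smul_set_vadd_set {M A : Type*} [Monoid M] [AddMonoid A] [DistribMulAction M A]
    (m : M) (x : A) (K : Set A) : m • (x +ᵥ K) = m • x +ᵥ m • K := by
  simp only [← image_vadd, ← image_smul, image_image, vadd_eq_add, smul_add]

section NormedSpace

variable {E : Type*} [NormedAddCommGroup E] [NormedSpace ℝ E]

theorem subset_one_add_smul_of_hausdorffDist_le_s14 {K K' : Set E} {ε : ℝ} (hK : IsCompact K)
    (hK' : IsCompact K') (hK'conv : Convex ℝ K') (hB : closedBall 0 1 ⊆ K')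
    (hd : hausdorffDist K K' ≤ ε) : K ⊆ (1 + ε) • K' := by
  intro y hy
  have hε : 0 ≤ ε := hausdorffDist_nonneg.trans hd
  have hK'ne : K'.Nonempty := ⟨0, hB (mem_closedBall_self zero_le_one)⟩
  have hfin : hausdorffEDist K K' ≠ ⊤ :=
    hausdorffEDist_ne_top_of_nonempty_of_bounded ⟨y, hy⟩ hK'ne hK.isBounded hK'.isBounded
  obtain ⟨z, hz, hyz⟩ := hK'.exists_infDist_eq_dist hK'ne y
  have hyz_mem : y - z ∈ ε • closedBall (0 : E) 1 := by
    rw [smul_unitClosedBall_of_nonneg hε, mem_closedBall_zero_iff, ← dist_eq_norm, ← hyz]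
    exact (infDist_le_hausdorffDist_of_mem hy hfin).trans hd
  rw [Convex.add_smul hK'conv zero_le_one hε, one_smul]
  exact ⟨z, hz, y - z, smul_set_mono hB hyz_mem, add_sub_cancel z y⟩

end NormedSpace

def IsTransPacking {E : Type*} [TopologicalSpace E] [Add E] (K X : Set E) : Prop :=
  X.Pairwise fun x y => interior (x +ᵥ K) ∩ interior (y +ᵥ K) = ∅

namespace IsTransPacking

variable {E : Type*} {K L X : Set E}

theorem mono [TopologicalSpace E] [Add E] (h : IsTransPacking L X) (hKL : K ⊆ L) :
    IsTransPacking K X :=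
  fun _ hx _ hy hxy => subset_empty_iff.1 <| h hx hy hxy ▸
    inter_subset_inter (interior_mono (vadd_set_mono hKL)) (interior_mono (vadd_set_mono hKL))

theorem smul [NormedAddCommGroup E] [NormedSpace ℝ E] (h : IsTransPacking K X) {m : ℝ}
    (hm : m ≠ 0) : IsTransPacking (m • K) (m • X) := by
  rintro _ ⟨x, hx, rfl⟩ _ ⟨y, hy, rfl⟩ hxy
  rw [← smul_set_vadd_set, ← smul_set_vadd_set, interior_smul₀ hm, interior_smul₀ hm,
    ← smul_set_inter₀ hm, h hx hy (ne_of_apply_ne _ hxy), smul_set_empty]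

theorem pairwiseDisjoint_ball [SeminormedAddCommGroup E] (h : IsTransPacking K X) {ρ : ℝ}
    (hB : ball 0 ρ ⊆ K) : X.PairwiseDisjoint (ball · ρ) := by
  have hsub (z : E) : ball z ρ ⊆ interior (z +ᵥ K) := by
    rw [interior_vadd, ← vadd_ball_zero]
    exact vadd_set_mono (interior_maximal hB isOpen_ball)
  exact fun x hx y hy hxy => disjoint_iff_inter_eq_empty.2 <| subset_empty_iff.1 <|
    h hx hy hxy ▸ inter_subset_inter (hsub x) (hsub y)

end IsTransPacking

section EuclideanSpace

variable {n : ℕ}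

local notation "E" => EuclideanSpace ℝ (Fin n)

theorem transDensity_le_deltaT {K X : Set E} (hX : X.Countable) (hp : IsTransPacking K X) :
    transDensity n K X ≤ deltaT n K :=
  le_iSup₂_of_le (f := fun X (_ : X.Countable ∧ IsTransPacking K X) => transDensity n K X)
    X ⟨hX, hp⟩ le_rfl

theorem volume_smul_of_nonneg {m : ℝ} (hm : 0 ≤ m) (S : Set E) :
    volume (m • S) = ENNReal.ofReal (m ^ n) * volume S := by
  rw [Measure.addHaar_smul, finrank_euclideanSpace_fin, abs_of_nonneg (pow_nonneg hm n)]

theorem transDensity_smul_s14 {m : ℝ} (hm : 0 < m) (K X : Set E) :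
    transDensity n (m • K) (m • X) = transDensity n K X := by
  have hball {R : ℝ} (hR : 0 ≤ R) : m • closedBall (0 : E) (R / m) = closedBall 0 R := by
    rw [smul_closedBall m (0 : E) (div_nonneg hR hm.le), smul_zero, Real.norm_of_nonneg hm.le,
      mul_div_cancel₀ _ hm.ne']
  have hMn : ENNReal.ofReal (m ^ n) ≠ 0 := (ENNReal.ofReal_pos.2 (pow_pos hm n)).ne'
  unfold transDensity
  conv_rhs => rw [← limsup_comp_div_const _ hm]
  refine limsup_congr ?_
  filter_upwards [eventually_ge_atTop 0] with R hR
  rw [← image_smul, tsum_image (fun y => volume ((y +ᵥ m • K) ∩ closedBall 0 R))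
    (smul_right_injective E hm.ne').injOn, ← hball hR]
  simp_rw [← smul_set_vadd_set, ← smul_set_inter₀ hm.ne', volume_smul_of_nonneg hm.le,
    ENNReal.tsum_mul_left]
  exact ENNReal.mul_div_mul_left _ _ hMn ENNReal.ofReal_ne_top

theorem volume_closedBall_add_le {r R : ℝ} (hr : 0 ≤ r) (hrR : r ≤ R) :
    volume (closedBall (0 : E) (R + r)) ≤ 2 ^ n * volume (closedBall (0 : E) R) := by
  rw [Measure.addHaar_closedBall _ _ (by linarith), Measure.addHaar_closedBall _ _ (by linarith),
    finrank_euclideanSpace_fin, ← mul_assoc]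
  gcongr
  calc ENNReal.ofReal ((R + r) ^ n) ≤ ENNReal.ofReal ((2 * R) ^ n) := by gcongr <;> linarith
    _ = 2 ^ n * ENNReal.ofReal (R ^ n) := by
      rw [mul_pow, ENNReal.ofReal_mul (by positivity), ENNReal.ofReal_pow zero_le_two,
        ENNReal.ofReal_ofNat]

-- The excess `vol(L \ K)` of a translate meeting `closedBall 0 R` is charged to its unit ball,
-- which lies in the larger ball; translates missing `closedBall 0 R` contribute nothing.
theorem volume_vadd_inter_closedBall_le {K L : Set E} {r R : ℝ} (hLr : L ⊆ closedBall 0 r)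
    (x : E) :
    volume ((x +ᵥ L) ∩ closedBall 0 R) ≤ volume ((x +ᵥ K) ∩ closedBall 0 R) +
      volume (L \ K) / volume (ball (0 : E) 1) *
        volume (ball x 1 ∩ closedBall 0 (R + (r + 1))) := by
  by_cases hx : ‖x‖ ≤ R + r
  · have hxS : ball x 1 ⊆ closedBall 0 (R + (r + 1)) := ball_subset_closedBall.trans
      (closedBall_subset_closedBall' (by rw [dist_zero_right]; linarith))
    have hsplit : (x +ᵥ L) ∩ closedBall 0 R ⊆ (x +ᵥ K) ∩ closedBall 0 R ∪ (x +ᵥ (L \ K)) := by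
      rw [vadd_set_sdiff]
      rintro y ⟨hyL, hyR⟩
      by_cases hyK : y ∈ x +ᵥ K
      exacts [Or.inl ⟨hyK, hyR⟩, Or.inr ⟨hyL, hyK⟩]
    calc volume ((x +ᵥ L) ∩ closedBall 0 R)
        ≤ volume ((x +ᵥ K) ∩ closedBall 0 R) + volume (x +ᵥ (L \ K)) :=
          (measure_mono hsplit).trans (measure_union_le _ _)
      _ = _ := by
        rw [measure_vadd, inter_eq_self_of_subset_left hxS, ← vadd_ball_zero 1 x, measure_vadd,
          ENNReal.div_mul_cancel (measure_ball_pos volume 0 one_pos).ne' measure_ball_lt_top.ne]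
  · have hempty : (x +ᵥ L) ∩ closedBall 0 R = ∅ := by
      refine eq_empty_of_forall_notMem ?_
      rintro _ ⟨⟨l, hl, rfl⟩, hxl⟩
      have hl' : ‖l‖ ≤ r := by simpa using hLr hl
      have hxl' : ‖x + l‖ ≤ R := by simpa using hxl
      exact hx <| calc ‖x‖ = ‖(x + l) - l‖ := by rw [add_sub_cancel_right]
        _ ≤ ‖x + l‖ + ‖l‖ := norm_sub_le _ _
        _ ≤ R + r := add_le_add hxl' hl'
    simp [hempty]

theorem tsum_volume_vadd_inter_closedBall_le {K L X : Set E} {r R : ℝ} (hp : IsTransPacking L X)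
    (hKL : K ⊆ L) (hB : ball 0 1 ⊆ K) (hLr : L ⊆ closedBall 0 r) (hR : r + 1 ≤ R) :
    ∑' x : X, volume (((x : E) +ᵥ L) ∩ closedBall 0 R) ≤
      ∑' x : X, volume (((x : E) +ᵥ K) ∩ closedBall 0 R) +
        2 ^ n * volume (L \ K) / volume (ball (0 : E) 1) * volume (closedBall (0 : E) R) := by
  have hr : 0 ≤ r := by
    simpa using hLr (hKL (hB (mem_ball_self one_pos)))
  set S := closedBall (0 : E) (R + (r + 1))
  set v := volume (ball (0 : E) 1)
  have hdisj : Pairwise (Function.onFun Disjoint fun x : X => ball (x : E) 1 ∩ S) := fun x y hxy =>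
    (hp.pairwiseDisjoint_ball (hB.trans hKL) x.2 y.2 (Subtype.coe_ne_coe.2 hxy)).mono
      inter_subset_left inter_subset_left
  have hcount : ∑' x : X, volume (ball (x : E) 1 ∩ S) ≤ 2 ^ n * volume (closedBall (0 : E) R) :=
    calc ∑' x : X, volume (ball (x : E) 1 ∩ S)
        ≤ volume S := (tsum_meas_le_meas_iUnion_of_disjoint _
          (fun _ => measurableSet_ball.inter measurableSet_closedBall) hdisj).trans
          (measure_mono (iUnion_subset fun _ => inter_subset_right))
      _ ≤ 2 ^ n * volume (closedBall (0 : E) R) := volume_closedBall_add_le (by linarith) hR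
  calc ∑' x : X, volume (((x : E) +ᵥ L) ∩ closedBall 0 R)
      ≤ ∑' x : X, (volume (((x : E) +ᵥ K) ∩ closedBall 0 R) +
          volume (L \ K) / v * volume (ball (x : E) 1 ∩ S)) :=
        ENNReal.tsum_le_tsum fun x => volume_vadd_inter_closedBall_le hLr x
    _ = ∑' x : X, volume (((x : E) +ᵥ K) ∩ closedBall 0 R) +
          volume (L \ K) / v * ∑' x : X, volume (ball (x : E) 1 ∩ S) := by
      rw [ENNReal.tsum_add, ENNReal.tsum_mul_left]
    _ ≤ ∑' x : X, volume (((x : E) +ᵥ K) ∩ closedBall 0 R) +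
          volume (L \ K) / v * (2 ^ n * volume (closedBall (0 : E) R)) := by gcongr
    _ = _ := by simp only [div_eq_mul_inv]; ring

theorem transDensity_le_add_of_subset {K L X : Set E} {r : ℝ} (hp : IsTransPacking L X)
    (hKL : K ⊆ L) (hB : ball 0 1 ⊆ K) (hLr : L ⊆ closedBall 0 r) :
    transDensity n L X ≤ transDensity n K X + 2 ^ n * volume (L \ K) / volume (ball (0 : E) 1) := by
  unfold transDensity
  rw [← limsup_add_const atTop _ _ (by isBoundedDefault) (by isBoundedDefault)]
  refine limsup_le_limsup ?_
  filter_upwards [eventually_ge_atTop (r + 1), eventually_gt_atTop 0] with R hR hR0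
  have hcb : volume (closedBall (0 : E) R) ≠ 0 := (measure_closedBall_pos volume 0 hR0).ne'
  calc _ ≤ _ := ENNReal.div_le_div_right (tsum_volume_vadd_inter_closedBall_le hp hKL hB hLr hR) _
    _ = _ := by rw [ENNReal.add_div, ENNReal.mul_div_cancel_right hcb measure_closedBall_lt_top.ne]

theorem volume_smul_diff_le {K K' : Set E} {m : ℝ} (hm : 0 < m) (hK'K : K' ⊆ m • K)
    (hKK' : K ⊆ m • K') (hK' : MeasurableSet K') (hK : volume K ≠ ⊤) :
    volume (m • K \ K') ≤ ENNReal.ofReal (m ^ n - (m ^ n)⁻¹) * volume K := by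
  have hK'vol : ENNReal.ofReal ((m ^ n)⁻¹) * volume K ≤ volume K' :=
    calc ENNReal.ofReal ((m ^ n)⁻¹) * volume K
        ≤ ENNReal.ofReal ((m ^ n)⁻¹) * (ENNReal.ofReal (m ^ n) * volume K') := by
          rw [← volume_smul_of_nonneg hm.le]; gcongr
      _ = volume K' := by
          rw [← mul_assoc, ← ENNReal.ofReal_mul (by positivity),
            inv_mul_cancel₀ (pow_pos hm n).ne', ENNReal.ofReal_one, one_mul]
  have hK'fin : volume K' ≠ ⊤ := ne_top_of_le_ne_top
    (by rw [volume_smul_of_nonneg hm.le]; exact ENNReal.mul_ne_top ENNReal.ofReal_ne_top hK)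
    (measure_mono hK'K)
  rw [measure_sdiff hK'K hK'.nullMeasurableSet hK'fin, volume_smul_of_nonneg hm.le,
    ENNReal.ofReal_sub _ (by positivity), ENNReal.sub_mul fun _ _ => hK]
  exact tsub_le_tsub_left hK'vol _

theorem volume_one_add_smul_diff_div_le {K K' : Set E} {ε ρ : ℝ} (hε : 0 ≤ ε) (hε1 : ε ≤ 1)
    (hK'K : K' ⊆ (1 + ε) • K) (hKK' : K ⊆ (1 + ε) • K') (hK' : MeasurableSet K')
    (hρ : 0 ≤ ρ) (hKρ : K ⊆ closedBall 0 ρ) :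
    2 ^ n * volume ((1 + ε) • K \ K') / volume (ball (0 : E) 1) ≤
      ENNReal.ofReal (2 ^ (2 * n + 1) * ρ ^ n * ε) := by
  set v := volume (ball (0 : E) 1)
  have hvolK : volume K ≤ ENNReal.ofReal (ρ ^ n) * v := (measure_mono hKρ).trans_eq <| by
    rw [Measure.addHaar_closedBall _ _ hρ, finrank_euclideanSpace_fin]
  have hKfin : volume K ≠ ⊤ := (hvolK.trans_lt (ENNReal.mul_lt_top ENNReal.ofReal_lt_top
    measure_ball_lt_top)).ne
  calc 2 ^ n * volume ((1 + ε) • K \ K') / v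
      ≤ 2 ^ n * (ENNReal.ofReal (2 ^ (n + 1) * ε) * (ENNReal.ofReal (ρ ^ n) * v)) / v := by
        gcongr
        refine (volume_smul_diff_le (by positivity) hK'K hKK' hK' hKfin).trans ?_
        exact mul_le_mul' (ENNReal.ofReal_le_ofReal (one_add_pow_sub_inv_le n hε hε1)) hvolK
    _ = ENNReal.ofReal (2 ^ (2 * n + 1) * ρ ^ n * ε) := by
        rw [← mul_assoc, ← mul_assoc, ENNReal.mul_div_cancel_right
            (measure_ball_pos volume 0 one_pos).ne' measure_ball_lt_top.ne,
          ← ENNReal.ofReal_ofNat 2, ← ENNReal.ofReal_pow zero_le_two,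
          ← ENNReal.ofReal_mul (by positivity), ← ENNReal.ofReal_mul (by positivity)]
        ring_nf

theorem deltaT_le_add_of_hausdorffDist_le {K K' : Set E} {ρ : ℝ} (hK : IsCompact K)
    (hKconv : Convex ℝ K) (hK' : IsCompact K') (hK'conv : Convex ℝ K')
    (hBK : closedBall 0 1 ⊆ K) (hKρ : K ⊆ closedBall 0 ρ) (hBK' : closedBall 0 1 ⊆ K')
    (hd : hausdorffDist K K' ≤ 1) :
    deltaT n K ≤ deltaT n K' + ENNReal.ofReal (2 ^ (2 * n + 1) * ρ ^ n * hausdorffDist K K') := by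
  set ε := hausdorffDist K K'
  have hε : 0 ≤ ε := hausdorffDist_nonneg
  have hρ : 0 ≤ ρ := by simpa using hKρ (hBK (mem_closedBall_self zero_le_one))
  set m := 1 + ε
  have hm : 0 < m := by positivity
  have hK'K : K' ⊆ m • K :=
    subset_one_add_smul_of_hausdorffDist_le_s14 hK' hK hKconv hBK (hausdorffDist_comm ..).le
  have hKK' : K ⊆ m • K' := subset_one_add_smul_of_hausdorffDist_le_s14 hK hK' hK'conv hBK' le_rfl
  have hmK : m • K ⊆ closedBall 0 (2 * ρ) := by
    refine (smul_set_mono hKρ).trans ?_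
    rw [smul_closedBall _ _ hρ, smul_zero, Real.norm_of_nonneg hm.le]
    exact closedBall_subset_closedBall (by nlinarith)
  refine iSup₂_le fun X ⟨hX, (hp : IsTransPacking K X)⟩ => ?_
  calc transDensity n K X = transDensity n (m • K) (m • X) := (transDensity_smul_s14 hm K X).symm
    _ ≤ transDensity n K' (m • X) + 2 ^ n * volume (m • K \ K') / volume (ball (0 : E) 1) :=
      transDensity_le_add_of_subset (hp.smul hm.ne') hK'K (ball_subset_closedBall.trans hBK') hmK
    _ ≤ deltaT n K' + ENNReal.ofReal (2 ^ (2 * n + 1) * ρ ^ n * ε) :=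
      add_le_add (transDensity_le_deltaT (hX.image _) ((hp.smul hm.ne').mono hK'K))
        (volume_one_add_smul_diff_div_le hε hd hK'K hKK' hK'.measurableSet hρ hKρ)

end EuclideanSpace

theorem stmt_14_general (n : ℕ) :
    ∃ c d : ℝ, 0 < c ∧ 0 < d ∧
      ∀ K₁ K₂ : Set (EuclideanSpace ℝ (Fin n)),
        IsCompact K₁ → Convex ℝ K₁ → (interior K₁).Nonempty →
        IsCompact K₂ → Convex ℝ K₂ → (interior K₂).Nonempty →
        closedBall (0 : EuclideanSpace ℝ (Fin n)) 1 ⊆ K₁ → K₁ ⊆ closedBall 0 n →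
        closedBall (0 : EuclideanSpace ℝ (Fin n)) 1 ⊆ K₂ → K₂ ⊆ closedBall 0 n →
        hausdorffDist K₁ K₂ ≤ d →
        max (deltaT n K₁ - deltaT n K₂) (deltaT n K₂ - deltaT n K₁) ≤
          ENNReal.ofReal (c * hausdorffDist K₁ K₂) := by
  refine ⟨2 ^ (2 * n + 1) * n ^ n, 1,
    mul_pos (by positivity) (by exact_mod_cast Nat.pow_self_pos), one_pos, ?_⟩
  intro K₁ K₂ hK₁ hK₁conv _ hK₂ hK₂conv _ hB₁ hK₁n hB₂ hK₂n hd
  refine max_le (tsub_le_iff_left.2 ?_) (tsub_le_iff_left.2 ?_)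
  · exact deltaT_le_add_of_hausdorffDist_le hK₁ hK₁conv hK₂ hK₂conv hB₁ hK₁n hB₂ hd
  · rw [hausdorffDist_comm]
    exact deltaT_le_add_of_hausdorffDist_le hK₂ hK₂conv hK₁ hK₁conv hB₂ hK₂n hB₁
      ((hausdorffDist_comm ..).trans_le hd)

/-- There exist positive constants `c` and `d`, depending only on the dimension
`n`, such that `|δ^t(K₁) − δ^t(K₂)| ≤ c · d_H(K₁,K₂)` for every pair `K₁, K₂ ∈ 𝒦^{n*}` with
`d_H(K₁,K₂) ≤ d`.  (The absolute difference in `ℝ≥0∞` is expressed via truncated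
subtraction as `max (δ^t(K₁) - δ^t(K₂)) (δ^t(K₂) - δ^t(K₁))`.) -/
theorem stmt_14 (n : ℕ) (hn : 1 ≤ n) :
    ∃ c d : ℝ, 0 < c ∧ 0 < d ∧
      ∀ K₁ K₂ : Set (EuclideanSpace ℝ (Fin n)),
        IsCompact K₁ → Convex ℝ K₁ → (interior K₁).Nonempty →
        IsCompact K₂ → Convex ℝ K₂ → (interior K₂).Nonempty →
        closedBall (0 : EuclideanSpace ℝ (Fin n)) 1 ⊆ K₁ → K₁ ⊆ closedBall 0 n →
        closedBall (0 : EuclideanSpace ℝ (Fin n)) 1 ⊆ K₂ → K₂ ⊆ closedBall 0 n →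
        hausdorffDist K₁ K₂ ≤ d →
        max (deltaT n K₁ - deltaT n K₂) (deltaT n K₂ - deltaT n K₁) ≤
          ENNReal.ofReal (c * hausdorffDist K₁ K₂) :=
  stmt_14_general n
end

section
/- For any two centrally symmetric convex bodies C₁ and C₂ in ℝⁿ there exists an invertible linear transformation σ of ℝⁿ such that C₁ ⊆ σ(C₂) ⊆ nC₁; that is, the Banach–Mazur distance between any two n-dimensional centrally symmetric convex bodies is at most log n. -/
open Metric Set Pointwise Topology

/-! Among the linear maps `T` with `T(C₂) ⊆ C₁` take one maximising `|det T|`: these maps form a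
compact set containing a small homothety, so the maximum is positive and `T` is invertible. If some
`x ∈ C₁` were outside `n • T(C₂)`, Hahn–Banach would give a functional `g` with `|g| ≤ 1` on
`T(C₂)` and `g x > n`. Then `S = (1 - t) • id + t • g(·) x` still maps `T(C₂)` into `C₁` (its
values are convex combinations of a point of `C₁` and of `g(y) • x ∈ [-x, x]`), yet
`det S = (1 - t)ⁿ (1 + t g(x) / (1 - t)) > 1` for small `t > 0`, so `S ∘ T` beats `T`. -/

theorem LinearMap.det_id_add_smulRight {K V : Type*} [Field K] [AddCommGroup V] [Module K V]
    [FiniteDimensional K V] (f : V →ₗ[K] K) (x : V) :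
    LinearMap.det (LinearMap.id + f.smulRight x) = 1 + f x := by
  classical
  let b := Module.finBasis K V
  have hmatrix : LinearMap.toMatrix b b (LinearMap.id + f.smulRight x) =
      1 + Matrix.replicateCol Unit (b.repr x) * Matrix.replicateRow Unit (f ∘ b) := by
    ext i j
    simp [LinearMap.toMatrix_apply, Matrix.one_apply, Matrix.mul_apply, Finsupp.single_apply,
      eq_comm, mul_comm]
  rw [← LinearMap.det_toMatrix b, hmatrix, Matrix.det_one_add_replicateCol_mul_replicateRow]
  conv_rhs => rw [← b.sum_repr x]
  simp only [dotProduct, map_sum, map_smul, smul_eq_mul, Function.comp_apply, mul_comm]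

theorem exists_one_lt_one_sub_pow_mul (n : ℕ) {G : ℝ} (hG : n < G) :
    ∃ t : ℝ, 0 < t ∧ t < 1 ∧ 1 < (1 - t) ^ n * (1 + t / (1 - t) * G) := by
  have hG₀ : 0 < G := n.cast_nonneg.trans_lt hG
  have hGn : 0 < G - n := sub_pos.2 hG
  -- small enough that Bernoulli's bound `(1 - t) ^ n ≥ 1 - n t` already gives the claim
  set t := (G - n) / (2 * (n + 1) * G) with ht
  have ht₀ : 0 < t := by positivity
  have hnt : n * G * t < G - n := by
    rw [ht, mul_div_assoc', div_lt_iff₀ (by positivity)]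
    nlinarith [mul_pos hG₀ hGn]
  have ht₁ : t < 1 := by
    rw [ht, div_lt_one (by positivity)]
    nlinarith
  refine ⟨t, ht₀, ht₁, ?_⟩
  have hbernoulli : 1 - n * t ≤ (1 - t) ^ n := by
    simpa [sub_eq_add_neg, mul_comm] using one_add_mul_le_pow (a := -t) (by linarith) n
  calc 1 < (1 - n * t) * (1 + t * G) := by nlinarith
    _ ≤ (1 - t) ^ n * (1 + t * G) := by gcongr
    _ ≤ (1 - t) ^ n * (1 + t / (1 - t) * G) := by
        gcongr
        exact le_div_self ht₀.le (by linarith) (by linarith)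

theorem Convex.smul_mem_of_abs_le_one {E : Type*} [AddCommGroup E] [Module ℝ E] {C : Set E}
    (hC : Convex ℝ C) {x : E} (hx : x ∈ C) (hx' : -x ∈ C) {s : ℝ} (hs : |s| ≤ 1) :
    s • x ∈ C := by
  obtain ⟨hs₁, hs₂⟩ := abs_le.1 hs
  convert hC hx hx' (a := (1 + s) / 2) (b := (1 - s) / 2) (by linarith) (by linarith) (by ring)
    using 1
  module

theorem Convex.mem_nhds_zero_of_neg_mem {E : Type*} [NormedAddCommGroup E] [NormedSpace ℝ E]
    {C : Set E} (hC : Convex ℝ C) (hC_int : (interior C).Nonempty) (hC_neg : ∀ x ∈ C, -x ∈ C) :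
    C ∈ 𝓝 0 := by
  obtain ⟨x, hx⟩ := hC_int
  have hx' : -x ∈ interior C :=
    interior_maximal (fun y hy => by simpa using hC_neg _ (interior_subset hy)) isOpen_interior.neg
      (by simpa using hx)
  rw [← mem_interior_iff_mem_nhds]
  convert hC.interior hx hx' (a := 1 / 2) (b := 1 / 2) (by norm_num) (by norm_num) (by norm_num)
    using 1
  module

section

variable {E : Type*} [NormedAddCommGroup E] [NormedSpace ℝ E] [FiniteDimensional ℝ E]

theorem isCompact_setOf_mapsTo {F : Type*} [NormedAddCommGroup F] [NormedSpace ℝ F]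
    [FiniteDimensional ℝ F] {s : Set E} {t : Set F} (hs : s ∈ 𝓝 0) (ht : IsCompact t) :
    IsCompact {T : E →L[ℝ] F | MapsTo T s t} := by
  have hclosed : IsClosed {T : E →L[ℝ] F | MapsTo T s t} := by
    simp only [MapsTo, ofPred_forall]
    exact isClosed_biInter fun x _ =>
      ht.isClosed.preimage (ContinuousLinearMap.apply ℝ F x).continuous
  obtain ⟨ε, hε, hball⟩ := Metric.mem_nhds_iff.1 hs
  obtain ⟨R, hR₀, hR⟩ := ht.isBounded.exists_pos_norm_le
  refine Metric.isCompact_of_isClosed_isBounded hclosed <|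
    isBounded_iff_forall_norm_le.2 ⟨2 * R / ε, fun T hT => ?_⟩
  refine ContinuousLinearMap.opNorm_le_of_shell hε (by positivity) (c := (2 : ℝ)) (by norm_num)
    fun x hx₁ hx₂ => ?_
  rw [Real.norm_two] at hx₁
  calc ‖T x‖ ≤ R := hR _ (hT (hball (mem_ball_zero_iff.2 hx₂)))
    _ = 2 * R / ε * (ε / 2) := by field_simp
    _ ≤ 2 * R / ε * ‖x‖ := by gcongr

theorem subset_finrank_smul_of_forall_abs_det_le_one [Nontrivial E] {C D : Set E}
    (hC : Convex ℝ C) (hC_neg : ∀ x ∈ C, -x ∈ C) (hD : IsCompact D) (hD_conv : Convex ℝ D)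
    (hD_neg : ∀ x ∈ D, -x ∈ D) (hD₀ : (0 : E) ∈ D) (hDC : D ⊆ C)
    (hmax : ∀ S : E →ₗ[ℝ] E, MapsTo S D C → |LinearMap.det S| ≤ 1) :
    C ⊆ (Module.finrank ℝ E : ℝ) • D := by
  set n := Module.finrank ℝ E
  intro x hx
  by_contra hxD
  obtain ⟨f, u, hfD, hfx⟩ :=
    geometric_hahn_banach_closed_point (hD_conv.smul (n : ℝ)) (hD.smul (n : ℝ)).isClosed hxD
  have hu : 0 < u := by simpa using hfD 0 ⟨0, hD₀, smul_zero _⟩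
  set g : E →ₗ[ℝ] ℝ := ((n : ℝ) / u) • (f : E →ₗ[ℝ] ℝ)
  have hg : ∀ y, g y = n * f y / u := fun y => by simp [g, mul_div_right_comm]
  have hgD : ∀ d ∈ D, |g d| ≤ 1 := by
    have hlt : ∀ d ∈ D, g d < 1 := fun d hd => by
      rw [hg, div_lt_one hu, ← smul_eq_mul, ← map_smul]
      exact hfD _ (smul_mem_smul_set hd)
    exact fun d hd => abs_le.2 ⟨by linarith [hlt _ (hD_neg d hd), map_neg g d], (hlt d hd).le⟩
  have hgx : (n : ℝ) < g x := by
    rw [hg, lt_div_iff₀ hu]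
    exact mul_lt_mul_of_pos_left hfx (Nat.cast_pos.2 Module.finrank_pos)
  obtain ⟨t, ht₀, ht₁, hdet⟩ := exists_one_lt_one_sub_pow_mul n hgx
  set S : E →ₗ[ℝ] E := (1 - t) • (LinearMap.id + ((t / (1 - t)) • g).smulRight x)
  have hS : ∀ y, S y = (1 - t) • y + t • (g y • x) := fun y => by
    simp only [S, LinearMap.smul_apply, LinearMap.add_apply, LinearMap.id_apply,
      LinearMap.smulRight_apply, smul_add, smul_smul, smul_eq_mul]
    rw [← mul_assoc, mul_div_cancel₀ _ (by linarith : 1 - t ≠ 0)]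
  have hSD : MapsTo S D C := fun d hd => by
    rw [hS]
    exact hC (hDC hd) (hC.smul_mem_of_abs_le_one hx (hC_neg x hx) (hgD d hd))
      (by linarith) ht₀.le (by ring)
  have hdetS : LinearMap.det S = (1 - t) ^ n * (1 + t / (1 - t) * g x) := by
    simp only [S, LinearMap.det_smul, LinearMap.det_id_add_smulRight, LinearMap.smul_apply,
      smul_eq_mul, n]
  have hSmax := hmax S hSD
  rw [hdetS, abs_of_pos (by linarith)] at hSmax
  linarith

theorem exists_mapsTo_isMaxOn_abs_det {C₁ C₂ : Set E} (hC₁ : IsCompact C₁) (hC₁_nhds : C₁ ∈ 𝓝 0)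
    (hC₂ : Bornology.IsBounded C₂) (hC₂_nhds : C₂ ∈ 𝓝 0) :
    ∃ T₀ : E →L[ℝ] E, MapsTo T₀ C₂ C₁ ∧ 0 < |LinearMap.det (T₀ : E →ₗ[ℝ] E)| ∧
      ∀ T : E →L[ℝ] E, MapsTo T C₂ C₁ →
        |LinearMap.det (T : E →ₗ[ℝ] E)| ≤ |LinearMap.det (T₀ : E →ₗ[ℝ] E)| := by
  obtain ⟨r, hr, hrC⟩ := (NormedSpace.isVonNBounded_of_isBounded ℝ hC₂ hC₁_nhds).exists_pos
  have hhomothety : MapsTo (r⁻¹ • ContinuousLinearMap.id ℝ E) C₂ C₁ := fun y hy => by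
    simpa using (subset_smul_set_iff₀ hr.ne').1 (hrC r (le_abs_self r)) (smul_mem_smul_set hy)
  obtain ⟨T₀, hT₀, hT₀_max⟩ := (isCompact_setOf_mapsTo hC₂_nhds hC₁).exists_isMaxOn
    ⟨_, hhomothety⟩ ContinuousLinearMap.continuous_det.abs.continuousOn
  refine ⟨T₀, hT₀, ?_, fun T hT => hT₀_max hT⟩
  have hle : |LinearMap.det (r⁻¹ • LinearMap.id : E →ₗ[ℝ] E)| ≤
      |LinearMap.det (T₀ : E →ₗ[ℝ] E)| := hT₀_max hhomothety
  rw [LinearMap.det_smul, LinearMap.det_id] at hle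
  exact lt_of_lt_of_le (by positivity) hle

theorem exists_linearEquiv_subset_image_subset_finrank_smul [Nontrivial E] {C₁ C₂ : Set E}
    (hC₁ : IsCompact C₁) (hC₁_conv : Convex ℝ C₁) (hC₁_nhds : C₁ ∈ 𝓝 0)
    (hC₁_neg : ∀ x ∈ C₁, -x ∈ C₁)
    (hC₂ : IsCompact C₂) (hC₂_conv : Convex ℝ C₂) (hC₂_nhds : C₂ ∈ 𝓝 0)
    (hC₂_neg : ∀ x ∈ C₂, -x ∈ C₂) :
    ∃ σ : E ≃ₗ[ℝ] E, C₁ ⊆ σ '' C₂ ∧ σ '' C₂ ⊆ (Module.finrank ℝ E : ℝ) • C₁ := by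
  set n := Module.finrank ℝ E
  obtain ⟨T₀, hT₀, hdet₀, hT₀_max⟩ :=
    exists_mapsTo_isMaxOn_abs_det hC₁ hC₁_nhds hC₂.isBounded hC₂_nhds
  have hD_neg : ∀ x ∈ T₀ '' C₂, -x ∈ T₀ '' C₂ := by
    rintro _ ⟨y, hy, rfl⟩
    exact ⟨-y, hC₂_neg y hy, map_neg T₀ y⟩
  have hC₁_sub : C₁ ⊆ (n : ℝ) • T₀ '' C₂ := by
    refine subset_finrank_smul_of_forall_abs_det_le_one hC₁_conv hC₁_neg
      (hC₂.image T₀.continuous) (hC₂_conv.linear_image (T₀ : E →ₗ[ℝ] E)) hD_neg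
      ⟨0, mem_of_mem_nhds hC₂_nhds, map_zero T₀⟩ hT₀.image_subset fun S hS => ?_
    have hle := hT₀_max (S.toContinuousLinearMap.comp T₀) (hS.comp (mapsTo_image T₀ C₂))
    rw [ContinuousLinearMap.toLinearMap_comp, LinearMap.coe_toContinuousLinearMap,
      LinearMap.det_comp, abs_mul] at hle
    exact (mul_le_iff_le_one_left hdet₀).1 hle
  have hdet : LinearMap.det ((n : ℝ) • (T₀ : E →ₗ[ℝ] E)) ≠ 0 := by
    rw [LinearMap.det_smul]
    exact mul_ne_zero (pow_ne_zero _ (Nat.cast_ne_zero.2 Module.finrank_pos.ne'))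
      (abs_pos.1 hdet₀)
  let σ := LinearMap.equivOfDetNeZero _ hdet
  have himage : σ '' C₂ = (n : ℝ) • T₀ '' C₂ := by
    rw [← image_smul, image_image]
    rfl
  exact ⟨σ, himage ▸ hC₁_sub, himage ▸ smul_set_mono hT₀.image_subset⟩

end

/-- For any two centrally symmetric convex bodies `C₁` and `C₂` in `ℝⁿ` there
exists an invertible linear transformation `σ` of `ℝⁿ` such that `C₁ ⊆ σ(C₂) ⊆ n·C₁`; that is,
the Banach–Mazur distance between any two `n`-dimensional centrally symmetric convex bodies is
at most `log n`. -/
theorem stmt_18 (n : ℕ) (hn : 1 ≤ n) (C₁ C₂ : Set (EuclideanSpace ℝ (Fin n)))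
    (hC₁comp : IsCompact C₁) (hC₁conv : Convex ℝ C₁) (hC₁int : (interior C₁).Nonempty)
    (hC₁symm : C₁ = -C₁)
    (hC₂comp : IsCompact C₂) (hC₂conv : Convex ℝ C₂) (hC₂int : (interior C₂).Nonempty)
    (hC₂symm : C₂ = -C₂) :
    ∃ σ : EuclideanSpace ℝ (Fin n) ≃ₗ[ℝ] EuclideanSpace ℝ (Fin n),
      C₁ ⊆ σ '' C₂ ∧ σ '' C₂ ⊆ (n : ℝ) • C₁ := by
  have : Nontrivial (EuclideanSpace ℝ (Fin n)) :=
    Module.nontrivial_of_finrank_pos (by rwa [finrank_euclideanSpace_fin])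
  have hC₁neg : ∀ x ∈ C₁, -x ∈ C₁ := fun x hx => by rw [hC₁symm] at hx; exact hx
  have hC₂neg : ∀ x ∈ C₂, -x ∈ C₂ := fun x hx => by rw [hC₂symm] at hx; exact hx
  simpa only [finrank_euclideanSpace_fin] using
    exists_linearEquiv_subset_image_subset_finrank_smul hC₁comp hC₁conv
      (hC₁conv.mem_nhds_zero_of_neg_mem hC₁int hC₁neg) hC₁neg hC₂comp hC₂conv
      (hC₂conv.mem_nhds_zero_of_neg_mem hC₂int hC₂neg) hC₂neg
end

section
/- For any two convex bodies K₁ and K₂ in ℝⁿ there exist an invertible affine transformation σ of ℝⁿ and a point x ∈ ℝⁿ such that K₁ ⊆ σ(K₂) ⊆ n²K₁ + x; that is, the Banach–Mazur distance between any two n-dimensional convex bodies is at most 2·log n. -/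
/-!
Inside each body choose a simplex of maximal volume. Maximality means that no point of the body
has a barycentric coordinate larger than `1` (replacing a vertex by the point multiplies the
volume by that coordinate), so the body lies in the image of its simplex under the homothety of
ratio `-n` about the centroid. Map the simplex of `K₂` affinely onto this `-n`-image of the
simplex of `K₁`: then `σ K₂` contains that image, hence `K₁`, and lies in the `-n`-image of
`σ` of the simplex of `K₂`, which is the `n²`-image of the simplex of `K₁` and so lies in a
translate of `n² K₁`.
-/

open Set Pointwise AffineMap Module

namespace AffineMap

variable {k V P V₂ P₂ : Type*} [CommRing k] [AddCommGroup V] [Module k V] [AddTorsor V P]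
  [AddCommGroup V₂] [Module k V₂] [AddTorsor V₂ P₂]

theorem apply_homothety (f : P →ᵃ[k] P₂) (c : P) (r : k) (p : P) :
    f (homothety c r p) = homothety (f c) r (f p) := by
  simp only [homothety_eq_lineMap, f.apply_lineMap]

theorem image_homothety_eq_vadd_smul (c : V) (r : k) (s : Set V) :
    homothety c r '' s = (c - r • c) +ᵥ r • s := by
  rw [← image_smul, ← image_vadd, image_image]
  congr 1
  funext p
  rw [homothety_apply, vsub_eq_sub, vadd_eq_add, vadd_eq_add, smul_sub]
  abel

end AffineMap

theorem Finset.map_centroid {ι k V P V₂ P₂ : Type*} [DivisionRing k] [CharZero k]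
    [AddCommGroup V] [Module k V] [AddTorsor V P] [AddCommGroup V₂] [Module k V₂]
    [AddTorsor V₂ P₂] (f : P →ᵃ[k] P₂) {s : Finset ι} (hs : s.Nonempty) (p : ι → P) :
    f (s.centroid k p) = s.centroid k (f ∘ p) := by
  rw [centroid_def, centroid_def,
    map_affineCombination _ _ _ (s.sum_centroidWeights_eq_one_of_nonempty k hs)]

namespace AffineBasis

theorem exists_affineEquiv_apply_eq {ι k V P V₂ P₂ : Type*} [Ring k] [AddCommGroup V]
    [Module k V] [AddTorsor V P] [AddCommGroup V₂] [Module k V₂] [AddTorsor V₂ P₂]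
    (b : AffineBasis ι k P) (b' : AffineBasis ι k P₂) :
    ∃ τ : P ≃ᵃ[k] P₂, ∀ i, τ (b i) = b' i := by
  obtain ⟨i₀⟩ := b.nonempty
  let L := (b.basisOf i₀).equiv (b'.basisOf i₀) (Equiv.refl _)
  refine ⟨((AffineEquiv.vaddConst k (b i₀)).symm.trans L.toAffineEquiv).trans
    (AffineEquiv.vaddConst k (b' i₀)), fun i => ?_⟩
  by_cases hi : i = i₀
  · subst hi
    simp
  · have h := (b.basisOf i₀).equiv_apply ⟨i, hi⟩ (b'.basisOf i₀) (Equiv.refl _)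
    simp only [basisOf_apply, Equiv.refl_apply] at h
    simp [L, h]

theorem coord_homothety_centroid {ι k V P : Type*} [Fintype ι] [Field k] [CharZero k]
    [AddCommGroup V] [Module k V] [AddTorsor V P] (b : AffineBasis ι k P) (i : ι) (r : k)
    (p : P) :
    b.coord i (homothety (Finset.univ.centroid k b) r p) =
      (1 - r) * (Fintype.card ι : k)⁻¹ + r * b.coord i p := by
  rw [homothety_eq_lineMap, AffineMap.apply_lineMap, lineMap_apply_ring,
    b.coord_apply_centroid (Finset.mem_univ i), Finset.card_univ]

theorem setOf_coord_le_one_subset_homothety_convexHull {ι E : Type*} [Fintype ι]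
    [AddCommGroup E] [Module ℝ E] [Nontrivial E] (b : AffineBasis ι ℝ E) :
    {y | ∀ i, b.coord i y ≤ 1} ⊆
      homothety (Finset.univ.centroid ℝ b) (-(finrank ℝ E : ℝ)) '' convexHull ℝ (range b) := by
  have := b.finiteDimensional
  have hn : (0 : ℝ) < finrank ℝ E := by exact_mod_cast finrank_pos
  intro y hy
  refine ⟨homothety (Finset.univ.centroid ℝ b) (-(finrank ℝ E : ℝ))⁻¹ y, ?_, ?_⟩
  · rw [b.convexHull_eq_nonneg_coord]
    intro i
    rw [coord_homothety_centroid, b.card_eq_finrank_add_one]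
    have h : (1 - (-(finrank ℝ E : ℝ))⁻¹) * ((finrank ℝ E + 1 : ℕ) : ℝ)⁻¹ +
        (-(finrank ℝ E : ℝ))⁻¹ * b.coord i y = (1 - b.coord i y) / finrank ℝ E := by
      push_cast
      field_simp
      ring
    rw [h]
    exact div_nonneg (sub_nonneg.2 (hy i)) hn.le
  · rw [← homothety_mul_apply, mul_inv_cancel₀ (neg_ne_zero.2 hn.ne'), homothety_one, id_apply]

theorem det_toMatrix_update {ι k V P : Type*} [Fintype ι] [DecidableEq ι] [CommRing k]
    [AddCommGroup V] [Module k V] [AddTorsor V P] (b₀ b : AffineBasis ι k P) (i : ι) (y : P) :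
    (b₀.toMatrix (Function.update b i y)).det = b.coord i y * (b₀.toMatrix b).det := by
  have h : b₀.toMatrix (Function.update b i y) =
      (b₀.toMatrix b).updateRow i (Matrix.vecMul (b.coords y) (b₀.toMatrix b)) := by
    rw [toMatrix_vecMul_coords]
    ext j l
    rcases eq_or_ne j i with rfl | hj
    · simp [toMatrix_apply, coords_apply]
    · simp [toMatrix_apply, hj]
  rw [h, Matrix.vecMul_eq_sum, Matrix.det_updateRow_sum, smul_eq_mul, coords_apply]

end AffineBasis

section FiniteDimensional

variable {E : Type*} [NormedAddCommGroup E] [NormedSpace ℝ E] [FiniteDimensional ℝ E]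

theorem IsCompact.exists_affineBasis_coord_le_one {ι : Type*} [Fintype ι] {K : Set E}
    (hK : IsCompact K) (b₀ : AffineBasis ι ℝ E) (hb₀ : range b₀ ⊆ K) :
    ∃ b : AffineBasis ι ℝ E, range b ⊆ K ∧ ∀ y ∈ K, ∀ i, b.coord i y ≤ 1 := by
  classical
  -- proportional to the volume of the simplex with vertices `v`
  let vol : (ι → E) → ℝ := fun v => |(b₀.toMatrix v).det|
  have hvol : Continuous vol :=
    continuous_abs.comp <| Continuous.matrix_det <| continuous_matrix fun i j =>
      (continuous_barycentric_coord b₀ j).comp (continuous_apply i)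
  obtain ⟨v, hvK, hvmax⟩ := (isCompact_univ_pi fun _ => hK).exists_isMaxOn
    ⟨b₀, fun i _ => hb₀ (mem_range_self i)⟩ hvol.continuousOn
  have hvK' : ∀ i, v i ∈ K := fun i => hvK i (mem_univ i)
  have hv : (b₀.toMatrix v).det ≠ 0 := by
    have h := hvmax (show ⇑b₀ ∈ univ.pi fun _ => K from fun i _ => hb₀ (mem_range_self i))
    simp only [mem_ofPred_eq, vol, AffineBasis.toMatrix_self, Matrix.det_one, abs_one] at h
    exact abs_pos.1 (one_pos.trans_le h)
  obtain ⟨hind, htot⟩ := (b₀.isUnit_toMatrix_iff v).1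
    ((Matrix.isUnit_iff_isUnit_det _).2 hv.isUnit)
  let b : AffineBasis ι ℝ E := ⟨v, hind, htot⟩
  refine ⟨b, range_subset_iff.2 hvK', fun y hy i => ?_⟩
  have h := hvmax (show Function.update v i y ∈ univ.pi fun _ => K from fun j _ => by
    rcases eq_or_ne j i with rfl | hj
    · simpa using hy
    · simpa [hj] using hvK' j)
  have hdet : (b₀.toMatrix (Function.update v i y)).det = b.coord i y * (b₀.toMatrix v).det :=
    b₀.det_toMatrix_update b i y
  have h' : |b.coord i y| * |(b₀.toMatrix v).det| ≤ 1 * |(b₀.toMatrix v).det| := by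
    simpa [vol, hdet, abs_mul] using h
  exact (le_abs_self _).trans (le_of_mul_le_mul_right h' (abs_pos.2 hv))

theorem exists_affineBasis_range_subset_of_interior_nonempty {K : Set E}
    (hK : (interior K).Nonempty) :
    ∃ b : AffineBasis (Fin (finrank ℝ E + 1)) ℝ E, range b ⊆ K := by
  obtain ⟨s, hs, b, hb⟩ := AffineBasis.exists_affine_subbasis (isOpen_interior.affineSpan_eq_top hK)
  lift s to Finset E using b.finite_set
  refine ⟨b.reindex (Fintype.equivFinOfCardEq b.card_eq_finrank_add_one), ?_⟩
  rw [AffineBasis.coe_reindex, EquivLike.range_comp, hb, Subtype.range_coe]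
  exact hs.trans interior_subset

theorem IsCompact.exists_affineBasis_subset_homothety_convexHull [Nontrivial E] {K : Set E}
    (hK : IsCompact K) (hKi : (interior K).Nonempty) :
    ∃ b : AffineBasis (Fin (finrank ℝ E + 1)) ℝ E, range b ⊆ K ∧
      K ⊆ homothety (Finset.univ.centroid ℝ b) (-(finrank ℝ E : ℝ)) '' convexHull ℝ (range b) := by
  obtain ⟨b₀, hb₀⟩ := exists_affineBasis_range_subset_of_interior_nonempty hKi
  obtain ⟨b, hbK, hb⟩ := hK.exists_affineBasis_coord_le_one b₀ hb₀
  exact ⟨b, hbK, fun y hy => b.setOf_coord_le_one_subset_homothety_convexHull (hb y hy)⟩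

theorem exists_affineEquiv_subset_image_subset_vadd_finrank_sq_smul {K₁ K₂ : Set E}
    (hK₁ : IsCompact K₁) (hK₁c : Convex ℝ K₁) (hK₁i : (interior K₁).Nonempty)
    (hK₂ : IsCompact K₂) (hK₂c : Convex ℝ K₂) (hK₂i : (interior K₂).Nonempty) :
    ∃ (σ : E ≃ᵃ[ℝ] E) (x : E), K₁ ⊆ σ '' K₂ ∧ σ '' K₂ ⊆ x +ᵥ ((finrank ℝ E : ℝ) ^ 2) • K₁ := by
  obtain ⟨y₁, hy₁⟩ := hK₁i
  obtain ⟨y₂, hy₂⟩ := hK₂i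
  rcases subsingleton_or_nontrivial E with hE | hE
  · exact ⟨AffineEquiv.refl ℝ E, 0, fun _ _ => ⟨y₂, interior_subset hy₂, Subsingleton.elim _ _⟩,
      fun _ _ => ⟨_, smul_mem_smul_set (interior_subset hy₁), Subsingleton.elim _ _⟩⟩
  set n : ℝ := (finrank ℝ E : ℝ)
  have hn : -n ≠ 0 := neg_ne_zero.2 (Nat.cast_ne_zero.2 finrank_pos.ne')
  obtain ⟨b₁, hb₁K, hK₁b⟩ := hK₁.exists_affineBasis_subset_homothety_convexHull ⟨y₁, hy₁⟩
  obtain ⟨b₂, hb₂K, hK₂b⟩ := hK₂.exists_affineBasis_subset_homothety_convexHull ⟨y₂, hy₂⟩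
  set g₁ := Finset.univ.centroid ℝ b₁
  obtain ⟨τ, hτ⟩ := b₂.exists_affineEquiv_apply_eq b₁
  have hτb : τ ∘ b₂ = b₁ := funext hτ
  have hτS : τ '' convexHull ℝ (range b₂) = convexHull ℝ (range b₁) := by
    rw [← τ.coe_toAffineMap, AffineMap.image_convexHull, ← range_comp, τ.coe_toAffineMap, hτb]
  have hτg : τ (Finset.univ.centroid ℝ b₂) = g₁ := by
    rw [← τ.coe_toAffineMap, Finset.map_centroid _ Finset.univ_nonempty, τ.coe_toAffineMap, hτb]
  let h := AffineEquiv.homothetyUnitsMulHom g₁ (Units.mk0 (-n) hn)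
  refine ⟨τ.trans h, g₁ - n ^ 2 • g₁, ?_, ?_⟩
  · calc K₁ ⊆ h '' convexHull ℝ (range b₁) := hK₁b
      _ = h '' (τ '' convexHull ℝ (range b₂)) := by rw [hτS]
      _ ⊆ h '' (τ '' K₂) := image_mono (image_mono (convexHull_min hb₂K hK₂c))
      _ = (τ.trans h) '' K₂ := by rw [image_image]; rfl
  · calc (τ.trans h) '' K₂
        ⊆ (τ.trans h) '' (homothety (Finset.univ.centroid ℝ b₂) (-n) '' convexHull ℝ (range b₂)) :=
          image_mono hK₂b
      _ = homothety g₁ (n ^ 2) '' convexHull ℝ (range b₁) := by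
          rw [← hτS, image_image, image_image]
          congr 1
          funext p
          have hτh := τ.toAffineMap.apply_homothety (Finset.univ.centroid ℝ b₂) (-n) p
          simp only [AffineEquiv.coe_toAffineMap, hτg] at hτh
          simp only [AffineEquiv.trans_apply, hτh, h, AffineEquiv.coe_homothetyUnitsMulHom_apply,
            Units.val_mk0, ← homothety_mul_apply]
          rw [neg_mul_neg, ← sq]
      _ ⊆ homothety g₁ (n ^ 2) '' K₁ := image_mono (convexHull_min hb₁K hK₁c)
      _ = (g₁ - n ^ 2 • g₁) +ᵥ n ^ 2 • K₁ := image_homothety_eq_vadd_smul _ _ _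

end FiniteDimensional

theorem stmt_19_general (n : ℕ) (K₁ K₂ : Set (EuclideanSpace ℝ (Fin n)))
    (hK₁comp : IsCompact K₁) (hK₁conv : Convex ℝ K₁) (hK₁int : (interior K₁).Nonempty)
    (hK₂comp : IsCompact K₂) (hK₂conv : Convex ℝ K₂) (hK₂int : (interior K₂).Nonempty) :
    ∃ (σ : EuclideanSpace ℝ (Fin n) ≃ᵃ[ℝ] EuclideanSpace ℝ (Fin n))
      (x : EuclideanSpace ℝ (Fin n)),
      K₁ ⊆ σ '' K₂ ∧ σ '' K₂ ⊆ x +ᵥ ((n : ℝ) ^ 2) • K₁ := by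
  simpa [finrank_euclideanSpace_fin] using
    exists_affineEquiv_subset_image_subset_vadd_finrank_sq_smul hK₁comp hK₁conv hK₁int
      hK₂comp hK₂conv hK₂int

/-- For any two convex bodies `K₁` and `K₂` in `ℝⁿ` there exist an invertible
affine transformation `σ` of `ℝⁿ` and a point `x ∈ ℝⁿ` such that `K₁ ⊆ σ(K₂) ⊆ n²·K₁ + x`;
that is, the Banach–Mazur distance between any two `n`-dimensional convex bodies is at most
`2·log n`. -/
theorem stmt_19 (n : ℕ) (hn : 1 ≤ n) (K₁ K₂ : Set (EuclideanSpace ℝ (Fin n)))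
    (hK₁comp : IsCompact K₁) (hK₁conv : Convex ℝ K₁) (hK₁int : (interior K₁).Nonempty)
    (hK₂comp : IsCompact K₂) (hK₂conv : Convex ℝ K₂) (hK₂int : (interior K₂).Nonempty) :
    ∃ (σ : EuclideanSpace ℝ (Fin n) ≃ᵃ[ℝ] EuclideanSpace ℝ (Fin n))
      (x : EuclideanSpace ℝ (Fin n)),
      K₁ ⊆ σ '' K₂ ∧ σ '' K₂ ⊆ x +ᵥ ((n : ℝ) ^ 2) • K₁ :=
  stmt_19_general n K₁ K₂ hK₁comp hK₁conv hK₁int hK₂comp hK₂conv hK₂int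
end
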